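/- arXiv:2507.09284 — 3 statements merged into one kernel-verified Lean document; each statement's English description precedes it below -/
import Mathlib

section
/- The linear map T : ℓ₁² → ℓ₁² defined by T(a, b) = (−3a + b)·(1, 0) preserves parallel pairs but does not preserve TEA pairs: the vectors (0,1) and (1,1) form a TEA pair in ℓ₁², but T(0,1) = (1,0) and T(1,1) = (−2,0) do not form a TEA pair. -/
/-!
`T` has rank one: its image is the line `ℝ • (1,0)`, and two vectors on a real line are always
parallel once the sign of one of them is flipped if necessary. Additivity of the norm, however,
is not preserved: `(0,1)` and `(1,1)` lie in the same closed quadrant of `ℓ₁²`, whereas their images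
`1 • (1,0)` and `-2 • (1,0)` point in opposite directions.
-/

def Parallel {E : Type*} [SeminormedAddCommGroup E] [NormedSpace ℝ E] (x y : E) : Prop :=
  ∃ μ : ℝ, ‖μ‖ = 1 ∧ ‖x + μ • y‖ = ‖x‖ + ‖y‖

lemma exists_abs_eq_one_abs_add_mul_eq (c d : ℝ) :
    ∃ μ : ℝ, |μ| = 1 ∧ |c + μ * d| = |c| + |d| := by
  rcases le_total 0 (c * d) with h | h
  · exact ⟨1, abs_one, by rw [one_mul]; exact (abs_add_eq_add_abs_iff _ _).2 (mul_nonneg_iff.1 h)⟩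
  · refine ⟨-1, by simp, ?_⟩
    rw [neg_one_mul, ← abs_neg d]
    exact (abs_add_eq_add_abs_iff _ _).2 (mul_nonneg_iff.1 (by linarith [mul_neg c d]))

lemma parallel_smul_smul {E : Type*} [SeminormedAddCommGroup E] [NormedSpace ℝ E]
    (c d : ℝ) (e : E) : Parallel (c • e) (d • e) := by
  obtain ⟨μ, hμ, hcd⟩ := exists_abs_eq_one_abs_add_mul_eq c d
  refine ⟨μ, hμ, ?_⟩
  simp only [smul_smul, ← add_smul, norm_smul, Real.norm_eq_abs, hcd, add_mul]

lemma PiLp.norm_toLp_fin_two_one (v : Fin 2 → ℝ) : ‖WithLp.toLp 1 v‖ = |v 0| + |v 1| := by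
  simp [PiLp.norm_eq_of_L1, Fin.sum_univ_two]

/-- The map `T(a,b) = (-3a+b)·(1,0)` on `ℓ₁²` preserves parallel pairs, while
`(0,1),(1,1)` form a TEA pair but their images `(1,0),(-2,0)` do not. -/
theorem rank_one_example_l1 (T : PiLp 1 (fun _ : Fin 2 => ℝ) →ₗ[ℝ] PiLp 1 (fun _ : Fin 2 => ℝ))
    (hT : ∀ v : PiLp 1 (fun _ : Fin 2 => ℝ),
      T v = (-3 * (WithLp.equiv 1 (Fin 2 → ℝ) v 0) + (WithLp.equiv 1 (Fin 2 → ℝ) v 1)) •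
        (WithLp.equiv 1 (Fin 2 → ℝ)).symm ![1, 0]) :
    (∀ x y : PiLp 1 (fun _ : Fin 2 => ℝ),
        (∃ l : ℝ, ‖l‖ = 1 ∧ ‖x + l • y‖ = ‖x‖ + ‖y‖) →
        (∃ μ : ℝ, ‖μ‖ = 1 ∧ ‖T x + μ • T y‖ = ‖T x‖ + ‖T y‖)) ∧
    (‖(WithLp.equiv 1 (Fin 2 → ℝ)).symm ![0, 1] + (WithLp.equiv 1 (Fin 2 → ℝ)).symm ![1, 1]‖ =
      ‖(WithLp.equiv 1 (Fin 2 → ℝ)).symm ![(0 : ℝ), 1]‖ +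
        ‖(WithLp.equiv 1 (Fin 2 → ℝ)).symm ![(1 : ℝ), 1]‖) ∧
    (‖T ((WithLp.equiv 1 (Fin 2 → ℝ)).symm ![0, 1]) + T ((WithLp.equiv 1 (Fin 2 → ℝ)).symm ![1, 1])‖ ≠
      ‖T ((WithLp.equiv 1 (Fin 2 → ℝ)).symm ![0, 1])‖ +
        ‖T ((WithLp.equiv 1 (Fin 2 → ℝ)).symm ![1, 1])‖) := by
  simp only [WithLp.equiv_symm_apply]
  refine ⟨fun x y _ => by rw [hT x, hT y]; exact parallel_smul_smul _ _ _, ?_, ?_⟩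
  · rw [← WithLp.toLp_add]
    norm_num [PiLp.norm_toLp_fin_two_one]
  · simp only [hT, ← add_smul, norm_smul]
    norm_num [PiLp.norm_toLp_fin_two_one]
end

section
/- Let A ∈ L(ℓ₁ⁿ, ℓ₁ᵐ) be a smooth point with ‖A‖ = 1. Then there exists a unique index j such that ‖Ae_j‖₁ = 1 and ‖Ae_i‖₁ < 1 for all i ≠ j; moreover, writing Ae_j = (c₁, …, c_m), all coordinates c_k are nonzero. -/
/-!
On `ℓ₁` the operator norm is the largest norm of a column `A e_j`, so some `e_j` is a
norm-attaining unit vector. As all norm-attaining unit vectors are unimodular multiples of `x₀`,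
no second `e_i` can attain the norm. Finally `A e_j` is a multiple of the smooth point `A x₀`, and
a norming functional `(g_k)` of `y ∈ ℓ₁` is only pinned down at the coordinates where `y_k ≠ 0`
(there `g_k = conj y_k / |y_k|`), so smoothness forces every coordinate of `A x₀` to be nonzero.
-/

namespace PiLp

section OperatorNorm

variable {𝕜 ι F : Type*} [NontriviallyNormedField 𝕜] [Fintype ι] [DecidableEq ι]
  [SeminormedAddCommGroup F] [NormedSpace 𝕜 F]

theorem norm_apply_le_sum_mul_norm_apply_single (A : PiLp 1 (fun _ : ι => 𝕜) →L[𝕜] F)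
    (x : PiLp 1 (fun _ : ι => 𝕜)) : ‖A x‖ ≤ ∑ j, ‖x j‖ * ‖A (single 1 j 1)‖ := by
  have hx : x = ∑ j, x j • single 1 j (1 : 𝕜) := by
    simpa only [basisFun_repr, basisFun_apply] using ((basisFun 1 𝕜 ι).sum_repr x).symm
  conv_lhs => rw [hx, map_sum]
  exact (norm_sum_le _ _).trans_eq (by simp only [map_smul, norm_smul])

theorem opNorm_le_of_norm_apply_single_le (A : PiLp 1 (fun _ : ι => 𝕜) →L[𝕜] F) {C : ℝ}
    (hC : 0 ≤ C) (h : ∀ j, ‖A (single 1 j 1)‖ ≤ C) : ‖A‖ ≤ C := by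
  refine A.opNorm_le_bound hC fun x => ?_
  calc ‖A x‖ ≤ ∑ j, ‖x j‖ * ‖A (single 1 j 1)‖ := norm_apply_le_sum_mul_norm_apply_single A x
    _ ≤ ∑ j, ‖x j‖ * C := by gcongr with j; exact h j
    _ = C * ‖x‖ := by rw [← Finset.sum_mul, norm_eq_of_L1, mul_comm]

theorem norm_apply_single_le_opNorm (A : PiLp 1 (fun _ : ι => 𝕜) →L[𝕜] F) (j : ι) :
    ‖A (single 1 j 1)‖ ≤ ‖A‖ := by
  simpa using A.le_opNorm (single 1 j 1)

theorem exists_norm_apply_single_eq_opNorm [Nonempty ι] (A : PiLp 1 (fun _ : ι => 𝕜) →L[𝕜] F) :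
    ∃ j, ‖A (single 1 j 1)‖ = ‖A‖ := by
  obtain ⟨j, hj⟩ := Finite.exists_max fun j => ‖A (single 1 j (1 : 𝕜))‖
  exact ⟨j, le_antisymm (norm_apply_single_le_opNorm A j)
    (opNorm_le_of_norm_apply_single_le A (norm_nonneg _) hj)⟩

end OperatorNorm

section Dual

variable {𝕜 ι : Type*} [RCLike 𝕜]

/-- Division by zero makes this `0` where `y k = 0`. -/
noncomputable def phase (y : PiLp 1 (fun _ : ι => 𝕜)) (k : ι) : 𝕜 :=
  starRingEnd 𝕜 (y k) / ‖y k‖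

theorem norm_phase_le_one (y : PiLp 1 (fun _ : ι => 𝕜)) (k : ι) : ‖phase y k‖ ≤ 1 := by
  simpa [phase] using div_self_le_one ‖y k‖

theorem phase_mul_self (y : PiLp 1 (fun _ : ι => 𝕜)) (k : ι) : phase y k * y k = ‖y k‖ := by
  rcases eq_or_ne (y k) 0 with hk | hk
  · simp [phase, hk]
  · have : (‖y k‖ : 𝕜) ≠ 0 := RCLike.ofReal_ne_zero.mpr (norm_ne_zero_iff.mpr hk)
    rw [phase, div_mul_eq_mul_div, RCLike.conj_mul]
    field_simp

variable [Fintype ι]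

noncomputable def pairing (g : ι → 𝕜) : PiLp 1 (fun _ : ι => 𝕜) →L[𝕜] 𝕜 :=
  ∑ k, g k • proj 1 (fun _ => 𝕜) k

theorem pairing_apply (g : ι → 𝕜) (y : PiLp 1 (fun _ : ι => 𝕜)) :
    pairing g y = ∑ k, g k * y k := by
  simp [pairing]

theorem pairing_apply_single [DecidableEq ι] (g : ι → 𝕜) (k : ι) :
    pairing g (single 1 k 1) = g k := by
  simp [pairing_apply, single_apply]

theorem norm_pairing_le_one {g : ι → 𝕜} (hg : ∀ k, ‖g k‖ ≤ 1) : ‖pairing g‖ ≤ 1 := by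
  refine ContinuousLinearMap.opNorm_le_bound _ zero_le_one fun y => ?_
  calc ‖pairing g y‖ ≤ ∑ k, ‖g k‖ * ‖y k‖ := by
        rw [pairing_apply]
        exact (norm_sum_le _ _).trans_eq (by simp only [norm_mul])
    _ ≤ ∑ k, ‖y k‖ := by gcongr with k; exact mul_le_of_le_one_left (norm_nonneg _) (hg k)
    _ = 1 * ‖y‖ := by rw [one_mul, norm_eq_of_L1]

theorem pairing_isNorming {g : ι → 𝕜} {y : PiLp 1 (fun _ : ι => 𝕜)} (hy : y ≠ 0)
    (hg : ∀ k, ‖g k‖ ≤ 1) (hgy : ∀ k, g k * y k = ‖y k‖) :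
    ‖pairing g‖ = 1 ∧ pairing g y = ‖y‖ := by
  have hval : pairing g y = ‖y‖ := by
    simp only [pairing_apply, hgy, norm_eq_of_L1, RCLike.ofReal_sum]
  refine ⟨le_antisymm (norm_pairing_le_one hg) ?_, hval⟩
  have := (pairing g).le_opNorm y
  rwa [hval, RCLike.norm_ofReal, abs_norm, le_mul_iff_one_le_left (norm_pos_iff.mpr hy)] at this

theorem apply_ne_zero_of_existsUnique_norming [DecidableEq ι] {y : PiLp 1 (fun _ : ι => 𝕜)}
    (hy : y ≠ 0) (hsmooth : ∃! f : PiLp 1 (fun _ : ι => 𝕜) →L[𝕜] 𝕜, ‖f‖ = 1 ∧ f y = ‖y‖)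
    (k : ι) : y k ≠ 0 := by
  intro hk
  set g := Function.update (phase y) k 1
  have hg : ∀ l, ‖g l‖ ≤ 1 := fun l => by
    rcases eq_or_ne l k with rfl | hl
    · simp [g]
    · simpa [g, hl] using norm_phase_le_one y l
  have hgy : ∀ l, g l * y l = ‖y l‖ := fun l => by
    rcases eq_or_ne l k with rfl | hl
    · simp [g, hk]
    · simpa [g, hl] using phase_mul_self y l
  have hpairing := hsmooth.unique (pairing_isNorming hy (norm_phase_le_one y) (phase_mul_self y))
    (pairing_isNorming hy hg hgy)
  have := congrArg (fun f => f (single 1 k 1)) hpairing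
  simp [pairing_apply_single, g, phase, hk] at this

end Dual

end PiLp

theorem smooth_operator_structure_general {𝕜 : Type*} [RCLike 𝕜] {n m : ℕ}
    (A : PiLp 1 (fun _ : Fin n => 𝕜) →L[𝕜] PiLp 1 (fun _ : Fin m => 𝕜)) (hA : ‖A‖ = 1)
    (x₀ : PiLp 1 (fun _ : Fin n => 𝕜))
    (hM : {x : PiLp 1 (fun _ : Fin n => 𝕜) | ‖x‖ = 1 ∧ ‖A x‖ = ‖A‖} =
      {x : PiLp 1 (fun _ : Fin n => 𝕜) | ∃ α : 𝕜, ‖α‖ = 1 ∧ x = α • x₀})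
    (hsm : ∃! f : PiLp 1 (fun _ : Fin m => 𝕜) →L[𝕜] 𝕜, ‖f‖ = 1 ∧ f (A x₀) = (‖A x₀‖ : 𝕜)) :
    ∃ j : Fin n,
      ‖A ((WithLp.equiv 1 (Fin n → 𝕜)).symm (Pi.single j 1))‖ = 1 ∧
      (∀ i : Fin n, i ≠ j → ‖A ((WithLp.equiv 1 (Fin n → 𝕜)).symm (Pi.single i 1))‖ < 1) ∧
      (∀ k : Fin m,
        WithLp.equiv 1 (Fin m → 𝕜) (A ((WithLp.equiv 1 (Fin n → 𝕜)).symm (Pi.single j 1))) k ≠ 0) := by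
  simp only [WithLp.equiv_symm_apply, PiLp.toLp_single, WithLp.equiv_apply]
  have attains (x) : ‖x‖ = 1 ∧ ‖A x‖ = ‖A‖ ↔ ∃ α : 𝕜, ‖α‖ = 1 ∧ x = α • x₀ := Set.ext_iff.mp hM x
  obtain ⟨hx₀, hAx₀⟩ := (attains x₀).mpr ⟨1, norm_one, (one_smul _ _).symm⟩
  have : Nonempty (Fin n) := by
    by_contra h
    rw [not_nonempty_iff] at h
    simp [Subsingleton.elim x₀ 0] at hx₀
  obtain ⟨j, hj⟩ := PiLp.exists_norm_apply_single_eq_opNorm A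
  obtain ⟨α, hα, hej⟩ := (attains _).mp ⟨by simp, hj⟩
  have hα₀ : α ≠ 0 := norm_ne_zero_iff.mp (hα ▸ one_ne_zero)
  refine ⟨j, hj.trans hA, fun i hij => ?_, fun k => ?_⟩
  · refine hA ▸ (PiLp.norm_apply_single_le_opNorm A i).lt_of_ne fun hi => ?_
    obtain ⟨β, -, hei⟩ := (attains _).mp ⟨by simp, hi⟩
    have : (PiLp.single 1 i 1 : PiLp 1 (fun _ : Fin n => 𝕜)) = (β / α) • PiLp.single 1 j 1 := by
      rw [hei, hej, smul_smul, div_mul_cancel₀ _ hα₀]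
    simpa [PiLp.single_apply, hij] using congrArg (· i) this
  · have hAx₀' : A x₀ ≠ 0 := norm_ne_zero_iff.mp (by rw [hAx₀, hA]; exact one_ne_zero)
    rw [hej, map_smul, PiLp.smul_apply]
    exact mul_ne_zero hα₀ (PiLp.apply_ne_zero_of_existsUnique_norming hAx₀' hsm k)

/-- A smooth norm-one operator `A : ℓ₁ⁿ → ℓ₁ᵐ` attains its norm at exactly one coordinate
direction `e_j`, and `A e_j` has all coordinates nonzero. -/
theorem smooth_operator_structure {𝕜 : Type*} [RCLike 𝕜] {n m : ℕ}
    (A : PiLp 1 (fun _ : Fin n => 𝕜) →L[𝕜] PiLp 1 (fun _ : Fin m => 𝕜)) (hA : ‖A‖ = 1)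
    (x₀ : PiLp 1 (fun _ : Fin n => 𝕜)) (hx₀ : ‖x₀‖ = 1)
    (hM : {x : PiLp 1 (fun _ : Fin n => 𝕜) | ‖x‖ = 1 ∧ ‖A x‖ = ‖A‖} =
      {x : PiLp 1 (fun _ : Fin n => 𝕜) | ∃ α : 𝕜, ‖α‖ = 1 ∧ x = α • x₀})
    (hsm : ∃! f : PiLp 1 (fun _ : Fin m => 𝕜) →L[𝕜] 𝕜, ‖f‖ = 1 ∧ f (A x₀) = (‖A x₀‖ : 𝕜)) :
    ∃ j : Fin n,
      ‖A ((WithLp.equiv 1 (Fin n → 𝕜)).symm (Pi.single j 1))‖ = 1 ∧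
      (∀ i : Fin n, i ≠ j → ‖A ((WithLp.equiv 1 (Fin n → 𝕜)).symm (Pi.single i 1))‖ < 1) ∧
      (∀ k : Fin m,
        WithLp.equiv 1 (Fin m → 𝕜) (A ((WithLp.equiv 1 (Fin n → 𝕜)).symm (Pi.single j 1))) k ≠ 0) :=
  smooth_operator_structure_general A hA x₀ hM hsm
end

section
/- Let T : L(ℓ₁ⁿ, ℓ₁ᵐ) → L(ℓ₁ⁿ, ℓ₁ᵐ) be a linear map preserving TEA pairs, and suppose there is A ∈ ker(T) whose norm-attaining set is M_A = {αe_j : |α| = 1} for some index j. Then T = 0. -/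
/-!
If `T A = 0` and `‖A + X‖ = ‖A - X‖ = ‖A‖`, then `(A + X, A - X)` is a TEA pair, so its images
`T X` and `-T X` must be one too, forcing `T X = 0`. The norm of an operator on `ℓ₁` is its largest
column norm; so if column `k` of `A` strictly dominates the other columns, every `X` with vanishing
`k`-th column satisfies the condition above against a large multiple `t • A`. The description of
`M_A` says exactly that column `j` of `A` is strictly dominant, so `T` kills every operator with
zero `j`-th column. Among these are the rank-one operators supported on a column `k ≠ j`, which
then show that `T` also kills every operator with zero `k`-th column, and every operator is a sum
of one operator of each kind.
-/

open Filter

section TEA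

variable {V W : Type*} [SeminormedAddCommGroup V] [NormedAddCommGroup W]

def PreservesTEA (f : V → W) : Prop :=
  ∀ X Y, ‖X + Y‖ = ‖X‖ + ‖Y‖ → ‖f X + f Y‖ = ‖f X‖ + ‖f Y‖

variable {𝕜 : Type*} [RCLike 𝕜] [NormedSpace 𝕜 V] [Module 𝕜 W]

theorem PreservesTEA.map_eq_zero {T : V →ₗ[𝕜] W} (hT : PreservesTEA T) {A X : V} (hA : T A = 0)
    (hplus : ‖A + X‖ = ‖A‖) (hminus : ‖A - X‖ = ‖A‖) : T X = 0 := by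
  have hsum : ‖(A + X) + (A - X)‖ = ‖A + X‖ + ‖A - X‖ := by
    rw [hplus, hminus, add_add_sub_cancel, ← two_smul 𝕜, norm_smul, RCLike.norm_two, two_mul]
  have := hT _ _ hsum
  rw [map_add, map_sub, hA, zero_add, zero_sub, add_neg_cancel, norm_zero, norm_neg] at this
  exact norm_eq_zero.mp (by linarith [norm_nonneg (T X)])

end TEA

section L1

variable {𝕜 ι F : Type*} [RCLike 𝕜] [Fintype ι] [DecidableEq ι]
  [SeminormedAddCommGroup F] [NormedSpace 𝕜 F]

local notation "ℓ₁" => PiLp 1 (fun _ : ι => 𝕜)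

namespace ContinuousLinearMap

theorem norm_apply_single_le_opNorm (X : ℓ₁ →L[𝕜] F) (i : ι) :
    ‖X (PiLp.single 1 i 1)‖ ≤ ‖X‖ := by
  simpa using X.le_opNorm (PiLp.single 1 i 1)

theorem opNorm_le_of_forall_norm_apply_single_le (X : ℓ₁ →L[𝕜] F) {C : ℝ} (hC : 0 ≤ C)
    (h : ∀ i, ‖X (PiLp.single 1 i 1)‖ ≤ C) : ‖X‖ ≤ C := by
  refine X.opNorm_le_bound hC fun x => ?_
  calc ‖X x‖ = ‖∑ i, x i • X (PiLp.single 1 i 1)‖ := by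
        conv_lhs => rw [← (PiLp.basisFun 1 𝕜 ι).sum_repr x]
        simp [PiLp.basisFun_apply]
    _ ≤ ∑ i, ‖x i‖ * C := norm_sum_le_of_le _ fun i _ => by
        rw [norm_smul]; exact mul_le_mul_of_nonneg_left (h i) (norm_nonneg _)
    _ = C * ‖x‖ := by rw [PiLp.norm_eq_of_L1, ← Finset.sum_mul, mul_comm]

theorem opNorm_eq_norm_apply_single {X : ℓ₁ →L[𝕜] F} {k : ι}
    (h : ∀ i, ‖X (PiLp.single 1 i 1)‖ ≤ ‖X (PiLp.single 1 k 1)‖) :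
    ‖X‖ = ‖X (PiLp.single 1 k 1)‖ :=
  le_antisymm (opNorm_le_of_forall_norm_apply_single_le X (norm_nonneg _) h)
    (norm_apply_single_le_opNorm X k)

theorem exists_opNorm_smul_add_smul_eq {A X : ℓ₁ →L[𝕜] F} {k : ι}
    (hA : ∀ i ≠ k, ‖A (PiLp.single 1 i 1)‖ < ‖A (PiLp.single 1 k 1)‖)
    (hX : X (PiLp.single 1 k 1) = 0) :
    ∃ t : ℝ, ∀ s : 𝕜, ‖s‖ ≤ 1 → ‖(t : 𝕜) • A + s • X‖ = t * ‖A (PiLp.single 1 k 1)‖ := by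
  have hlarge : ∀ᶠ t : ℝ in atTop, 0 ≤ t ∧ ∀ i, i ≠ k →
      ‖X (PiLp.single 1 i 1)‖ + t * ‖A (PiLp.single 1 i 1)‖ ≤ t * ‖A (PiLp.single 1 k 1)‖ := by
    refine (eventually_ge_atTop 0).and (eventually_all.2 fun i => ?_)
    rcases eq_or_ne i k with rfl | hi
    · exact Eventually.of_forall fun _ h => absurd rfl h
    have hgap := (tendsto_id.atTop_mul_const (sub_pos.2 (hA i hi))).eventually_ge_atTop
      ‖X (PiLp.single 1 i 1)‖
    filter_upwards [hgap] with t ht _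
    simp only [id] at ht
    linarith
  obtain ⟨t, ht0, ht⟩ := hlarge.exists
  refine ⟨t, fun s hs => ?_⟩
  have hcol_k : ‖((t : 𝕜) • A + s • X) (PiLp.single 1 k 1)‖ = t * ‖A (PiLp.single 1 k 1)‖ := by
    simp [hX, norm_smul, abs_of_nonneg ht0]
  rw [← hcol_k]
  refine opNorm_eq_norm_apply_single fun i => ?_
  rcases eq_or_ne i k with rfl | hi
  · exact le_rfl
  rw [hcol_k]
  calc ‖((t : 𝕜) • A + s • X) (PiLp.single 1 i 1)‖
      ≤ ‖s‖ * ‖X (PiLp.single 1 i 1)‖ + t * ‖A (PiLp.single 1 i 1)‖ := by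
        simpa [norm_smul, abs_of_nonneg ht0, add_comm] using
          norm_add_le ((t : 𝕜) • A (PiLp.single 1 i 1)) (s • X (PiLp.single 1 i 1))
    _ ≤ ‖X (PiLp.single 1 i 1)‖ + t * ‖A (PiLp.single 1 i 1)‖ := by
        gcongr; exact mul_le_of_le_one_left (norm_nonneg _) hs
    _ ≤ t * ‖A (PiLp.single 1 k 1)‖ := ht i hi

theorem norm_apply_single_lt_of_normAttaining_eq {A : ℓ₁ →L[𝕜] F} {j : ι}
    (hMA : {x : ℓ₁ | ‖x‖ = 1 ∧ ‖A x‖ = ‖A‖} =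
      {x : ℓ₁ | ∃ α : 𝕜, ‖α‖ = 1 ∧ x = α • PiLp.single 1 j 1}) :
    ∀ i ≠ j, ‖A (PiLp.single 1 i 1)‖ < ‖A (PiLp.single 1 j 1)‖ := by
  intro i hij
  have hj : ‖A (PiLp.single 1 j 1)‖ = ‖A‖ :=
    ((Set.ext_iff.1 hMA _).2 ⟨1, by simp, by simp⟩).2
  refine hj ▸ (norm_apply_single_le_opNorm A i).lt_of_ne fun hi => ?_
  obtain ⟨α, -, hα⟩ := (Set.ext_iff.1 hMA _).1 ⟨by simp, hi⟩
  simpa [hij] using congrArg (· i) hα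

end ContinuousLinearMap

open ContinuousLinearMap in
theorem PreservesTEA.map_eq_zero_of_apply_single_eq_zero {W : Type*} [NormedAddCommGroup W]
    [Module 𝕜 W] {T : (ℓ₁ →L[𝕜] F) →ₗ[𝕜] W} (hT : PreservesTEA T) {A : ℓ₁ →L[𝕜] F}
    (hA : T A = 0) {k : ι} (hdom : ∀ i ≠ k, ‖A (PiLp.single 1 i 1)‖ < ‖A (PiLp.single 1 k 1)‖)
    {X : ℓ₁ →L[𝕜] F} (hX : X (PiLp.single 1 k 1) = 0) : T X = 0 := by
  obtain ⟨t, ht⟩ := exists_opNorm_smul_add_smul_eq hdom hX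
  have ht0 := ht 0 (by simp)
  rw [zero_smul, add_zero] at ht0
  refine hT.map_eq_zero (A := (t : 𝕜) • A) (by rw [map_smul, hA, smul_zero]) ?_ ?_
  · simpa [ht0] using ht 1 (by simp)
  · simpa [sub_eq_add_neg, ht0] using ht (-1) (by simp)

end L1

/-- If a linear map `T` on `L(ℓ₁ⁿ, ℓ₁ᵐ)` preserves TEA pairs and its kernel contains an operator
`A` whose norm-attaining set is exactly `{α e_j : |α| = 1}`, then `T = 0`. -/
theorem TEA_preserver_with_special_kernel_is_zero {𝕜 : Type*} [RCLike 𝕜] {n m : ℕ}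
    (hn : 2 ≤ n) (hm : 2 ≤ m)
    (T : (PiLp 1 (fun _ : Fin n => 𝕜) →L[𝕜] PiLp 1 (fun _ : Fin m => 𝕜)) →ₗ[𝕜]
      (PiLp 1 (fun _ : Fin n => 𝕜) →L[𝕜] PiLp 1 (fun _ : Fin m => 𝕜)))
    (hT : ∀ X Y : PiLp 1 (fun _ : Fin n => 𝕜) →L[𝕜] PiLp 1 (fun _ : Fin m => 𝕜),
      ‖X + Y‖ = ‖X‖ + ‖Y‖ → ‖T X + T Y‖ = ‖T X‖ + ‖T Y‖)
    (A : PiLp 1 (fun _ : Fin n => 𝕜) →L[𝕜] PiLp 1 (fun _ : Fin m => 𝕜)) (hA : T A = 0)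
    (j : Fin n)
    (hMA : {x : PiLp 1 (fun _ : Fin n => 𝕜) | ‖x‖ = 1 ∧ ‖A x‖ = ‖A‖} =
      {x : PiLp 1 (fun _ : Fin n => 𝕜) | ∃ α : 𝕜, ‖α‖ = 1 ∧
        x = α • (WithLp.equiv 1 (Fin n → 𝕜)).symm (Pi.single j 1)}) :
    T = 0 := by
  have : Nontrivial (Fin n) := Fin.nontrivial_iff_two_le.2 hn
  have : Nonempty (Fin m) := ⟨⟨0, by omega⟩⟩
  obtain ⟨k, hkj⟩ := exists_ne j
  obtain ⟨f, hf⟩ := exists_ne (0 : PiLp 1 fun _ : Fin m => 𝕜)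
  have hker_j : ∀ X : PiLp 1 (fun _ : Fin n => 𝕜) →L[𝕜] PiLp 1 (fun _ : Fin m => 𝕜),
      X (PiLp.single 1 j 1) = 0 → T X = 0 := fun X =>
    PreservesTEA.map_eq_zero_of_apply_single_eq_zero hT hA
      (ContinuousLinearMap.norm_apply_single_lt_of_normAttaining_eq hMA)
  have hker_k : ∀ X : PiLp 1 (fun _ : Fin n => 𝕜) →L[𝕜] PiLp 1 (fun _ : Fin m => 𝕜),
      X (PiLp.single 1 k 1) = 0 → T X = 0 := fun X =>
    PreservesTEA.map_eq_zero_of_apply_single_eq_zero hT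
      (A := (PiLp.proj (𝕜 := 𝕜) 1 (fun _ : Fin n => 𝕜) k).smulRight f)
      (hker_j _ (by simp [hkj.symm]))
      (fun i hi => by simp [hi, hf])
  refine LinearMap.ext fun X => ?_
  set P := (PiLp.proj (𝕜 := 𝕜) 1 (fun _ : Fin n => 𝕜) j).smulRight (X (PiLp.single 1 j 1))
  calc T X = T (X - P) + T P := by rw [← map_add, sub_add_cancel]
    _ = 0 := by rw [hker_j _ (by simp [P]), hker_k _ (by simp [P, hkj]), add_zero]
end
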